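/- Let r < e^{-2} and K_t(s) = (t−s)₊^{-1/2}|ln(t−s)₊|^{-1}. Then for all 0 ≤ t ≤ t+u ≤ r with u > 0, the L₂[0,r]-modulus of continuity satisfies ‖K_{t+u} − K_t‖₂ ≤ 2 |ln u|^{-1/2}, i.e. ∫₀ʳ (K_{t+u}(s) − K_t(s))² ds ≤ 4 |ln u|^{-1}. -/

import Mathlib

/-!
Both kernels are nonnegative and, because `v ↦ v⁻¹ (log v)⁻²` decreases on `(0, e⁻²]`,
`K_{t+u} ≤ K_t` before `t`; there `(K_{t+u} - K_t)² ≤ K_t² - K_{t+u}²`, while after `t` only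
`K_{t+u}` survives. As `K_t(s)² = g(t - s)` with `g v = (v log² v)⁻¹ = (-(log v)⁻¹)'` and
`-(log v)⁻¹ → 0` at `0⁺`, both pieces integrate in closed form, each to at most `|log u|⁻¹`.
-/

open scoped ENNReal
open MeasureTheory

/-- The critical Volterra kernel `K_t(s) = (t-s)₊^{-1/2} |ln (t-s)₊|^{-1}`,
interpreted as `0` for `s ≥ t`. -/
noncomputable def Ker (t s : ℝ) : ℝ :=
  if s < t then (t - s) ^ (-(1 : ℝ) / 2) * |Real.log (t - s)|⁻¹ else 0

open Set Filter Topology Real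

noncomputable def kerSq (v : ℝ) : ℝ := (v * log v ^ 2)⁻¹

/-- `log 0 = 0` makes `kerSqPrimitive 0 = 0`, its limit at `0⁺`. -/
noncomputable def kerSqPrimitive (v : ℝ) : ℝ := -(log v)⁻¹

lemma kerSq_nonneg {v : ℝ} (hv : 0 ≤ v) : 0 ≤ kerSq v := by
  unfold kerSq; positivity

lemma antitoneOn_kerSq : AntitoneOn kerSq (Ioc 0 (exp (-2))) := by
  have hmono : MonotoneOn (fun v => v * log v ^ 2) (Ioc 0 (exp (-2))) := by
    refine monotoneOn_of_hasDerivWithinAt_nonneg (f' := fun v => log v * (log v + 2))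
      (convex_Ioc _ _) ?_ (fun v hv => ?_) (fun v hv => ?_)
    · exact fun v hv => ((continuousAt_id.mul
        ((continuousAt_log hv.1.ne').pow 2))).continuousWithinAt
    · rw [interior_Ioc] at hv
      refine (((hasDerivAt_id' v).mul ((hasDerivAt_log hv.1.ne').pow 2)).congr_deriv
        ?_).hasDerivWithinAt
      have : v ≠ 0 := hv.1.ne'
      simp only [Pi.pow_apply]
      field_simp
      ring
    · rw [interior_Ioc] at hv
      have : log v < -2 := by
        rw [← log_exp (-2)]; exact log_lt_log hv.1 hv.2
      nlinarith
  intro a ha b hb hab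
  have hlog : log a < 0 := log_neg ha.1 (ha.2.trans_lt (exp_lt_one_iff.2 (by norm_num)))
  have hpos : 0 < a * log a ^ 2 := mul_pos ha.1 (sq_pos_of_neg hlog)
  exact inv_anti₀ hpos (hmono ha hb hab)

@[simp] lemma kerSqPrimitive_zero : kerSqPrimitive 0 = 0 := by simp [kerSqPrimitive]

lemma hasDerivAt_kerSqPrimitive {v : ℝ} (hv0 : 0 < v) (hv1 : v ≠ 1) :
    HasDerivAt kerSqPrimitive (kerSq v) v := by
  have hlog : log v ≠ 0 := log_ne_zero_of_pos_of_ne_one hv0 hv1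
  refine ((hasDerivAt_log hv0.ne').inv hlog).neg.congr_deriv ?_
  rw [kerSq]; field_simp

lemma continuousOn_kerSqPrimitive : ContinuousOn kerSqPrimitive (Ico 0 1) := by
  intro v hv
  rcases hv.1.eq_or_lt with rfl | hv0
  · have : Tendsto kerSqPrimitive (𝓝[>] 0) (𝓝 (kerSqPrimitive 0)) := by
      show Tendsto (fun v => -(log v)⁻¹) _ _
      simpa [kerSqPrimitive] using (tendsto_inv_atBot_zero.comp tendsto_log_nhdsGT_zero).neg
    exact (continuousWithinAt_Ioi_iff_Ici.1 this).mono Ico_subset_Ici_self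
  · exact (hasDerivAt_kerSqPrimitive hv0 hv.2.ne).continuousAt.continuousWithinAt

lemma intervalIntegrable_kerSq {a b : ℝ} (ha : 0 ≤ a) (hab : a ≤ b) (hb : b < 1) :
    IntervalIntegrable kerSq volume a b := by
  refine intervalIntegral.intervalIntegrable_deriv_of_nonneg (g := kerSqPrimitive) ?_
    (fun v hv => ?_) (fun v hv => ?_) <;>
    simp only [uIcc_of_le hab, min_eq_left hab, max_eq_right hab] at *
  · exact continuousOn_kerSqPrimitive.mono (Icc_subset_Ico ha hb)
  · exact hasDerivAt_kerSqPrimitive (ha.trans_lt hv.1) (hv.2.trans hb).ne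
  · exact kerSq_nonneg (ha.trans hv.1.le)

lemma integral_kerSq {a b : ℝ} (ha : 0 ≤ a) (hab : a ≤ b) (hb : b < 1) :
    ∫ v in a..b, kerSq v = kerSqPrimitive b - kerSqPrimitive a :=
  intervalIntegral.integral_eq_sub_of_hasDerivAt_of_le hab
    (continuousOn_kerSqPrimitive.mono (Icc_subset_Ico ha hb))
    (fun _ hv => hasDerivAt_kerSqPrimitive (ha.trans_lt hv.1) (hv.2.trans hb).ne)
    (intervalIntegrable_kerSq ha hab hb)

lemma Ker_nonneg (t s : ℝ) : 0 ≤ Ker t s := by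
  unfold Ker; split_ifs
  · exact mul_nonneg (rpow_nonneg (by linarith) _) (by positivity)
  · exact le_rfl

lemma Ker_of_le {t s : ℝ} (h : t ≤ s) : Ker t s = 0 := if_neg h.not_gt

lemma Ker_sq {t s : ℝ} (h : s < t) : Ker t s ^ 2 = kerSq (t - s) := by
  have hx : 0 < t - s := sub_pos.mpr h
  rw [Ker, if_pos h, mul_pow, ← rpow_natCast _ 2, ← rpow_mul hx.le, kerSq, mul_inv]
  norm_num [rpow_neg_one]

lemma Ker_le_Ker {t t' s : ℝ} (hs : s < t) (ht : t ≤ t') (ht' : t' - s ≤ exp (-2)) :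
    Ker t' s ≤ Ker t s := by
  rw [← pow_le_pow_iff_left₀ (Ker_nonneg _ _) (Ker_nonneg _ _) two_ne_zero,
    Ker_sq hs, Ker_sq (hs.trans_le ht)]
  exact antitoneOn_kerSq ⟨sub_pos.2 hs, by linarith⟩ ⟨by linarith, ht'⟩ (by linarith)


lemma intervalIntegrable_kerSq_comp_sub {a b c : ℝ} (hab : a ≤ b) (hb : 0 ≤ c - b)
    (ha : c - a < 1) : IntervalIntegrable (fun s => kerSq (c - s)) volume a b := by
  simpa using ((intervalIntegrable_kerSq hb (by linarith) ha).comp_sub_left c).symm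

lemma integral_kerSq_comp_sub {a b c : ℝ} (hab : a ≤ b) (hb : 0 ≤ c - b) (ha : c - a < 1) :
    ∫ s in a..b, kerSq (c - s) = kerSqPrimitive (c - a) - kerSqPrimitive (c - b) := by
  rw [intervalIntegral.integral_comp_sub_left, integral_kerSq hb (by linarith) ha]

lemma setLIntegral_Ioc_le_ofReal_intervalIntegral {F : ℝ → ℝ≥0∞} {f : ℝ → ℝ} {a b : ℝ}
    (hab : a ≤ b) (hf : IntervalIntegrable f volume a b) (hf0 : ∀ s ∈ Ioo a b, 0 ≤ f s)
    (hF : ∀ s ∈ Ioo a b, F s ≤ ENNReal.ofReal (f s)) :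
    ∫⁻ s in Ioc a b, F s ≤ ENNReal.ofReal (∫ s in a..b, f s) := by
  rw [intervalIntegral.integral_of_le hab, integral_Ioc_eq_integral_Ioo,
    setLIntegral_congr Ioo_ae_eq_Ioc.symm,
    ofReal_integral_eq_lintegral_ofReal (hf.1.mono_set Ioo_subset_Ioc_self)
      (ae_restrict_of_forall_mem measurableSet_Ioo hf0)]
  exact setLIntegral_mono' measurableSet_Ioo hF

lemma sq_Ker_sub_le {t u s : ℝ} (hs : s < t) (hu : 0 ≤ u) (h : t + u - s ≤ exp (-2)) :
    (Ker (t + u) s - Ker t s) ^ 2 ≤ kerSq (t - s) - kerSq (t + u - s) := by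
  have hle := Ker_le_Ker hs (le_add_of_nonneg_right hu) h
  rw [← Ker_sq hs, ← Ker_sq (by linarith)]
  nlinarith [Ker_nonneg (t + u) s]

lemma setLIntegral_Ioc_zero_sq_Ker_sub_le {t u : ℝ} (ht : 0 ≤ t) (hu : 0 ≤ u)
    (htu : t + u ≤ exp (-2)) :
    ∫⁻ s in Ioc 0 t, ENNReal.ofReal ((Ker (t + u) s - Ker t s) ^ 2) ≤
      ENNReal.ofReal (kerSqPrimitive u) := by
  have h1 : t + u < 1 := htu.trans_lt (exp_lt_one_iff.2 (by norm_num))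
  have hint : ∫ s in 0..t, (kerSq (t - s) - kerSq (t + u - s)) =
      kerSqPrimitive t - kerSqPrimitive (t + u) + kerSqPrimitive u := by
    rw [intervalIntegral.integral_sub
        (intervalIntegrable_kerSq_comp_sub ht (by simp) (by linarith))
        (intervalIntegrable_kerSq_comp_sub ht (by linarith) (by linarith)),
      integral_kerSq_comp_sub ht (by simp) (by linarith),
      integral_kerSq_comp_sub ht (by linarith) (by linarith)]
    simp only [sub_zero, sub_self, add_sub_cancel_left, kerSqPrimitive_zero]
    ring
  have hmono : kerSqPrimitive t ≤ kerSqPrimitive (t + u) := by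
    rw [← sub_nonneg, ← integral_kerSq ht (by linarith) h1]
    exact intervalIntegral.integral_nonneg (by linarith)
      (fun v hv => kerSq_nonneg (ht.trans hv.1))
  have hpt : ∀ s ∈ Ioo 0 t,
      (Ker (t + u) s - Ker t s) ^ 2 ≤ kerSq (t - s) - kerSq (t + u - s) :=
    fun s hs => sq_Ker_sub_le hs.2 hu (by linarith [hs.1])
  calc _ ≤ ENNReal.ofReal (∫ s in 0..t, (kerSq (t - s) - kerSq (t + u - s))) :=
        setLIntegral_Ioc_le_ofReal_intervalIntegral ht
          ((intervalIntegrable_kerSq_comp_sub ht (by simp) (by linarith)).sub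
            (intervalIntegrable_kerSq_comp_sub ht (by linarith) (by linarith)))
          (fun s hs => (sq_nonneg _).trans (hpt s hs))
          (fun s hs => ENNReal.ofReal_le_ofReal (hpt s hs))
    _ ≤ ENNReal.ofReal (kerSqPrimitive u) := by
        rw [hint]
        exact ENNReal.ofReal_le_ofReal (by linarith)

lemma setLIntegral_Ioc_add_sq_Ker_sub_le {t u : ℝ} (hu : 0 ≤ u) (hu1 : u < 1) :
    ∫⁻ s in Ioc t (t + u), ENNReal.ofReal ((Ker (t + u) s - Ker t s) ^ 2) ≤
      ENNReal.ofReal (kerSqPrimitive u) := by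
  have hpt : ∀ s ∈ Ioo t (t + u), (Ker (t + u) s - Ker t s) ^ 2 = kerSq (t + u - s) :=
    fun s hs => by rw [Ker_of_le hs.1.le, sub_zero, Ker_sq hs.2]
  calc _ ≤ ENNReal.ofReal (∫ s in t..t + u, kerSq (t + u - s)) :=
        setLIntegral_Ioc_le_ofReal_intervalIntegral (by linarith)
          (intervalIntegrable_kerSq_comp_sub (by linarith) (by simp) (by simpa))
          (fun s hs => kerSq_nonneg (by linarith [hs.2]))
          (fun s hs => ENNReal.ofReal_le_ofReal (hpt s hs).le)
    _ = ENNReal.ofReal (kerSqPrimitive u) := by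
        rw [integral_kerSq_comp_sub (by linarith) (by simp) (by simpa)]
        simp

lemma setLIntegral_Ioi_add_sq_Ker_sub {t u : ℝ} (hu : 0 ≤ u) :
    ∫⁻ s in Ioi (t + u), ENNReal.ofReal ((Ker (t + u) s - Ker t s) ^ 2) = 0 := by
  refine (setLIntegral_congr_fun measurableSet_Ioi fun s hs => ?_).trans lintegral_zero
  rw [Ker_of_le (le_of_lt hs), Ker_of_le (by linarith [mem_Ioi.1 hs])]
  simp

theorem kernel_modulus_of_continuity_general (r : ℝ) (hr : r < Real.exp (-2))
    (t u : ℝ) (ht : 0 ≤ t) (hu : 0 < u) (htu : t + u ≤ r) :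
    (∫⁻ s in Set.Ioc (0 : ℝ) r, ENNReal.ofReal ((Ker (t + u) s - Ker t s) ^ 2)) ≤
      ENNReal.ofReal (4 * |Real.log u|⁻¹) := by
  have hu1 : u < 1 := by linarith [exp_lt_one_iff.2 (by norm_num : (-2 : ℝ) < 0)]
  have hG : kerSqPrimitive u = |log u|⁻¹ := by
    rw [kerSqPrimitive, abs_of_neg (log_neg hu hu1), inv_neg]
  have hG0 : 0 ≤ kerSqPrimitive u := hG ▸ inv_nonneg.2 (abs_nonneg _)
  rw [← Ioc_union_Ioc_eq_Ioc (by linarith) htu, ← Ioc_union_Ioc_eq_Ioc ht (by linarith)]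
  calc _ ≤ ENNReal.ofReal (kerSqPrimitive u) + ENNReal.ofReal (kerSqPrimitive u) + 0 := by
        refine (lintegral_union_le _ _ _).trans (add_le_add ((lintegral_union_le _ _ _).trans
          (add_le_add ?_ ?_)) ?_)
        · exact setLIntegral_Ioc_zero_sq_Ker_sub_le ht hu.le (by linarith)
        · exact setLIntegral_Ioc_add_sq_Ker_sub_le hu.le hu1
        · exact (lintegral_mono_set Ioc_subset_Ioi_self).trans_eq
            (setLIntegral_Ioi_add_sq_Ker_sub hu.le)
    _ ≤ ENNReal.ofReal (4 * |log u|⁻¹) := by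
        rw [add_zero, ← ENNReal.ofReal_add hG0 hG0, ← hG]
        exact ENNReal.ofReal_le_ofReal (by linarith)

/-- Modulus of continuity of the critical kernel in `L₂[0,r]`, `r < e^{-2}`:
for `0 ≤ t ≤ t + u ≤ r` with `u > 0`,
`∫₀ʳ (K_{t+u}(s) - K_t(s))² ds ≤ 4 |ln u|^{-1}`. -/
theorem kernel_modulus_of_continuity (r : ℝ) (hr0 : 0 < r) (hr : r < Real.exp (-2))
    (t u : ℝ) (ht : 0 ≤ t) (hu : 0 < u) (htu : t + u ≤ r) :
    (∫⁻ s in Set.Ioc (0 : ℝ) r, ENNReal.ofReal ((Ker (t + u) s - Ker t s) ^ 2)) ≤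
      ENNReal.ofReal (4 * |Real.log u|⁻¹) :=
  kernel_modulus_of_continuity_general r hr t u ht hu htu
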